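/- arXiv:1308.5041 — 5 statements merged into one kernel-verified Lean document; each statement's English description precedes it below -/
import Mathlib

section
/- Let q be a prime power and let n ≥ 1 be an integer. Then |π_q(q^n) − ∑_{k=1}^{n} q^k/k| ≤ 11·q^{n/2}/n. -/
/-!
Over `𝔽_q`, `X ^ q ^ k - X` is separable and is the product of the monic irreducible
polynomials whose degree divides `k`; comparing degrees gives Gauss's formula
`∑_{d ∣ k} d N_d = q ^ k`, where `N_d` counts monic irreducible polynomials of degree `d`.
The divisors `d < k` are at most `k / 2` and contribute at most `∑_{d ≤ k/2} q ^ d ≤ 2 q ^ (k/2)`,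
so `|N_k - q ^ k / k| ≤ 2 √q ^ k / k`. Summing over `k ≤ n`, it remains to show
`∑_{k ≤ n} x ^ k / k ≤ (11/2) x ^ n / n` for `x = √q ≥ 7/5`. The ratio
`T_n = n x⁻ⁿ ∑_{k ≤ n} x ^ k / k` satisfies `T_{n+1} = (n+1)/n · x⁻¹ T_n + 1`; with `x⁻¹ ≤ 5/7`
this recursion keeps `T_n ≤ 11/2` once `n ≥ 7`, and the first seven values are computed.
-/

open Polynomial UniqueFactorizationMonoid Finset

theorem Polynomial.Monic.sum_natDegree_normalizedFactors {K : Type*} [Field K] [DecidableEq K]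
    {p : K[X]} (hp : p.Monic) : ((normalizedFactors p).map natDegree).sum = p.natDegree := by
  rw [← natDegree_multiset_prod _ (zero_notMem_normalizedFactors _),
    prod_normalizedFactors_eq hp.ne_zero, hp.normalize_eq_self]

theorem Nat.sum_Icc_pow_le_two_mul_pow {q : ℕ} (hq : 2 ≤ q) (m : ℕ) :
    ∑ d ∈ Icc 1 m, q ^ d ≤ 2 * q ^ m := by
  induction m with
  | zero => simp
  | succ m ih =>
    rw [sum_Icc_succ_top (Nat.le_add_left 1 m), pow_succ]
    have := Nat.mul_le_mul_left (q ^ m) hq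
    omega

namespace FiniteField

variable {F : Type*} [Field F] [Finite F] {k : ℕ}

theorem monic_X_pow_card_pow_sub_X (hk : k ≠ 0) : (X ^ Nat.card F ^ k - X : F[X]).Monic :=
  monic_X_pow_sub <| by
    rw [degree_X]
    exact_mod_cast Nat.one_lt_pow hk Finite.one_lt_card

theorem squarefree_X_pow_card_pow_sub_X (hk : k ≠ 0) :
    Squarefree (X ^ Nat.card F ^ k - X : F[X]) := by
  have : Fintype F := Fintype.ofFinite F
  refine (galois_poly_separable (ringChar F) _ (ringChar.dvd ?_)).squarefree
  rw [Nat.cast_pow, ← Fintype.card_eq_nat_card, FiniteField.cast_card_eq_zero, zero_pow hk]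

section

variable [DecidableEq F]

variable (F) in
noncomputable def monicIrreducibleDvd (k : ℕ) : Finset F[X] :=
  (normalizedFactors (X ^ Nat.card F ^ k - X : F[X])).toFinset

theorem mem_monicIrreducibleDvd (hk : k ≠ 0) {f : F[X]} :
    f ∈ monicIrreducibleDvd F k ↔ f.Monic ∧ Irreducible f ∧ f.natDegree ∣ k := by
  rw [monicIrreducibleDvd, Multiset.mem_toFinset,
    Polynomial.mem_normalizedFactors_iff (monic_X_pow_card_pow_sub_X hk).ne_zero]
  constructor
  · rintro ⟨hirr, hmon, hdvd⟩
    exact ⟨hmon, hirr, hirr.natDegree_dvd_iff_dvd_X_pow_card_pow_sub_X.mpr hdvd⟩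
  · rintro ⟨hmon, hirr, hdvd⟩
    exact ⟨hirr, hmon, hirr.natDegree_dvd_iff_dvd_X_pow_card_pow_sub_X.mp hdvd⟩

theorem sum_natDegree_monicIrreducibleDvd (hk : k ≠ 0) :
    ∑ f ∈ monicIrreducibleDvd F k, f.natDegree = Nat.card F ^ k := by
  have hnodup := (squarefree_iff_nodup_normalizedFactors
    (monic_X_pow_card_pow_sub_X (F := F) hk).ne_zero).mp (squarefree_X_pow_card_pow_sub_X hk)
  rw [sum_eq_multiset_sum, monicIrreducibleDvd, Multiset.toFinset_val,
    Multiset.dedup_eq_self.mpr hnodup,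
    (monic_X_pow_card_pow_sub_X hk).sum_natDegree_normalizedFactors,
    X_pow_card_pow_sub_X_natDegree_eq F hk Finite.one_lt_card]

theorem card_monicIrreducible_eq_card_filter (hk : k ≠ 0) (Q : ℕ → Prop) [DecidablePred Q]
    (hQ : ∀ d, 0 < d → Q d → d ∣ k) :
    Nat.card {f : F[X] // f.Monic ∧ Irreducible f ∧ Q f.natDegree} =
      #{f ∈ monicIrreducibleDvd F k | Q f.natDegree} := by
  rw [← Nat.card_eq_finsetCard]
  refine Nat.card_congr (Equiv.subtypeEquivRight fun f => ?_)
  rw [mem_filter, mem_monicIrreducibleDvd hk]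
  constructor
  · rintro ⟨hmon, hirr, hQf⟩
    exact ⟨⟨hmon, hirr, hQ _ hirr.natDegree_pos hQf⟩, hQf⟩
  · rintro ⟨⟨hmon, hirr, -⟩, hQf⟩
    exact ⟨hmon, hirr, hQf⟩

end

variable (F) in
noncomputable def monicIrreducibleCount (d : ℕ) : ℕ :=
  Nat.card {f : F[X] // f.Monic ∧ Irreducible f ∧ f.natDegree = d}

theorem sum_divisors_mul_monicIrreducibleCount (hk : k ≠ 0) :
    ∑ d ∈ k.divisors, d * monicIrreducibleCount F d = Nat.card F ^ k := by
  classical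
  rw [← sum_natDegree_monicIrreducibleDvd hk, ← sum_fiberwise_of_maps_to (g := natDegree)
    fun f hf => Nat.mem_divisors.mpr ⟨((mem_monicIrreducibleDvd hk).mp hf).2.2, hk⟩]
  refine sum_congr rfl fun d hd => ?_
  rw [sum_congr rfl fun f hf => (mem_filter.mp hf).2, sum_const, smul_eq_mul, mul_comm,
    monicIrreducibleCount, card_monicIrreducible_eq_card_filter hk (· = d)
      fun _ _ h => h ▸ Nat.dvd_of_mem_divisors hd]

theorem mul_monicIrreducibleCount_le (hk : k ≠ 0) :
    k * monicIrreducibleCount F k ≤ Nat.card F ^ k := by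
  rw [← sum_divisors_mul_monicIrreducibleCount hk]
  exact single_le_sum (f := fun d => d * monicIrreducibleCount F d) (fun _ _ => Nat.zero_le _)
    (Nat.mem_divisors_self k hk)

theorem pow_le_mul_monicIrreducibleCount_add (hk : k ≠ 0) :
    Nat.card F ^ k ≤ k * monicIrreducibleCount F k + 2 * Nat.card F ^ (k / 2) := by
  rw [← sum_divisors_mul_monicIrreducibleCount hk, ← Nat.cons_self_properDivisors hk, sum_cons]
  gcongr
  have hproper : k.properDivisors ⊆ Icc 1 (k / 2) := fun d hd => by
    obtain ⟨m, hm, rfl⟩ := (Nat.mem_properDivisors_iff_exists hk).mp hd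
    rw [mem_Icc, Nat.le_div_iff_mul_le two_pos]
    exact ⟨Nat.pos_of_mem_properDivisors hd, Nat.mul_le_mul_left d hm⟩
  calc ∑ d ∈ k.properDivisors, d * monicIrreducibleCount F d
      ≤ ∑ d ∈ k.properDivisors, Nat.card F ^ d :=
        sum_le_sum fun d hd =>
          mul_monicIrreducibleCount_le (Nat.pos_of_mem_properDivisors hd).ne'
    _ ≤ ∑ d ∈ Icc 1 (k / 2), Nat.card F ^ d := sum_le_sum_of_subset hproper
    _ ≤ 2 * Nat.card F ^ (k / 2) := Nat.sum_Icc_pow_le_two_mul_pow Finite.one_lt_card _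

theorem card_monicIrreducible_natDegree_le (n : ℕ) :
    Nat.card {f : F[X] // f.Monic ∧ Irreducible f ∧ f.natDegree ≤ n} =
      ∑ d ∈ Icc 1 n, monicIrreducibleCount F d := by
  classical
  have hn : n.factorial ≠ 0 := n.factorial_ne_zero
  rw [card_monicIrreducible_eq_card_filter hn (· ≤ n) fun d hd hdn => Nat.dvd_factorial hd hdn,
    card_eq_sum_card_fiberwise (t := Icc 1 n) (f := natDegree) fun f hf => ?_]
  · refine sum_congr rfl fun d hd => ?_
    rw [filter_filter, monicIrreducibleCount,
      card_monicIrreducible_eq_card_filter hn (· = d) fun _ _ h => h ▸ Nat.dvd_factorial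
        (mem_Icc.mp hd).1 (mem_Icc.mp hd).2]
    congr 1
    refine filter_congr fun f _ => ?_
    constructor
    · exact And.right
    · rintro rfl; exact ⟨(mem_Icc.mp hd).2, rfl⟩
  · obtain ⟨hf, hfn⟩ := mem_filter.mp hf
    exact mem_Icc.mpr ⟨((mem_monicIrreducibleDvd hn).mp hf).2.1.natDegree_pos, hfn⟩

theorem abs_monicIrreducibleCount_sub_le (hk : k ≠ 0) :
    |(monicIrreducibleCount F k : ℝ) - (Nat.card F : ℝ) ^ k / k| ≤
      2 * √(Nat.card F) ^ k / k := by
  have hk' : (0 : ℝ) < k := by positivity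
  have hup : (k : ℝ) * monicIrreducibleCount F k ≤ (Nat.card F : ℝ) ^ k := by
    exact_mod_cast mul_monicIrreducibleCount_le hk
  have hlow : (Nat.card F : ℝ) ^ k ≤
      k * monicIrreducibleCount F k + 2 * (Nat.card F : ℝ) ^ (k / 2) := by
    exact_mod_cast pow_le_mul_monicIrreducibleCount_add hk
  have hhalf : (Nat.card F : ℝ) ^ (k / 2) ≤ √(Nat.card F) ^ k := by
    conv_lhs => rw [← Real.sq_sqrt (Nat.cast_nonneg (Nat.card F)), ← pow_mul]
    have hq : 1 ≤ √(Nat.card F : ℝ) :=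
      Real.one_le_sqrt.mpr (Nat.one_le_cast.mpr (Finite.card_pos (α := F)))
    exact pow_le_pow_right₀ hq (Nat.mul_div_le k 2)
  rw [sub_div' hk'.ne', abs_div, abs_of_pos hk', mul_comm]
  gcongr
  rw [abs_le]
  constructor <;> linarith

end FiniteField

/-- Majorant of `T_n = n x⁻ⁿ ∑_{k=1}^n x ^ k / k` for `x ≥ 7/5`, obtained from the recursion
of `T_n` by replacing `x⁻¹` with `5/7`. At `n = 0` the junk value `1 / 0 = 0` gives
`sumPowDivBound 1 = 1`. -/
noncomputable def sumPowDivBound : ℕ → ℝ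
  | 0 => 0
  | n + 1 => 5 / 7 * ((n + 1) / n) * sumPowDivBound n + 1

theorem sumPowDivBound_nonneg (n : ℕ) : 0 ≤ sumPowDivBound n := by
  induction n with
  | zero => simp [sumPowDivBound]
  | succ n ih => rw [sumPowDivBound]; positivity

theorem sum_pow_div_le_sumPowDivBound {x : ℝ} (hx : 7 / 5 ≤ x) (n : ℕ) :
    ∑ k ∈ Icc 1 n, x ^ k / k ≤ sumPowDivBound n * x ^ n / n := by
  induction n with
  | zero => simp [sumPowDivBound]
  | succ n ih =>
    have hb := sumPowDivBound_nonneg n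
    have hxn : 0 ≤ x ^ n := pow_nonneg (by linarith) n
    have hstep : sumPowDivBound n * x ^ n ≤ 5 / 7 * sumPowDivBound n * x ^ (n + 1) := by
      rw [pow_succ]
      nlinarith [mul_nonneg (mul_nonneg hb hxn) (show (0 : ℝ) ≤ 5 / 7 * x - 1 by linarith)]
    rw [sum_Icc_succ_top (Nat.le_add_left 1 n), sumPowDivBound]
    calc ∑ k ∈ Icc 1 n, x ^ k / k + x ^ (n + 1) / (n + 1 : ℕ)
        ≤ sumPowDivBound n * x ^ n / n + x ^ (n + 1) / (n + 1 : ℕ) := by gcongr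
      _ ≤ 5 / 7 * sumPowDivBound n * x ^ (n + 1) / n + x ^ (n + 1) / (n + 1 : ℕ) := by
        gcongr ?_ + _
        exact div_le_div_of_nonneg_right hstep n.cast_nonneg
      _ = _ := by
        rcases eq_or_ne n 0 with rfl | hn
        · simp
        · push_cast
          field_simp

theorem sumPowDivBound_le (n : ℕ) : sumPowDivBound n ≤ 11 / 2 := by
  obtain hn | hn := le_or_gt n 7
  · interval_cases n <;> norm_num [sumPowDivBound]
  induction n, hn using Nat.le_induction with
  | base => norm_num [sumPowDivBound]
  | succ n hn ih =>
    have hn' : (8 : ℝ) ≤ n := by exact_mod_cast hn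
    have hratio : ((n : ℝ) + 1) / n ≤ 8 / 7 := by
      rw [div_le_div_iff₀ (by linarith) (by norm_num)]; linarith
    have := sumPowDivBound_nonneg n
    rw [sumPowDivBound]
    nlinarith

theorem sum_pow_div_le {x : ℝ} (hx : 7 / 5 ≤ x) (n : ℕ) :
    ∑ k ∈ Icc 1 n, x ^ k / k ≤ 11 / 2 * x ^ n / n := by
  refine (sum_pow_div_le_sumPowDivBound hx n).trans ?_
  have : 0 ≤ x ^ n := pow_nonneg (by linarith) n
  gcongr
  exact sumPowDivBound_le n

theorem stmt_1_general (q : ℕ) (F : Type*) [Field F] [Fintype F]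
    (hF : Fintype.card F = q) (n : ℕ) :
    |(Nat.card {f : Polynomial F // f.Monic ∧ Irreducible f ∧ f.natDegree ≤ n} : ℝ) -
        ∑ k ∈ Finset.Icc 1 n, (q : ℝ) ^ k / k| ≤
      11 * (q : ℝ) ^ ((n : ℝ) / 2) / n := by
  subst hF
  rw [Fintype.card_eq_nat_card, FiniteField.card_monicIrreducible_natDegree_le,
    Real.rpow_div_two_eq_sqrt _ (Nat.cast_nonneg _), Real.rpow_natCast]
  have hsqrt : 7 / 5 ≤ √(Nat.card F : ℝ) := by
    rw [Real.le_sqrt (by norm_num) (Nat.cast_nonneg _)]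
    have : (2 : ℝ) ≤ Nat.card F := by exact_mod_cast Finite.one_lt_card (α := F)
    linarith
  push_cast
  calc |∑ k ∈ Icc 1 n, (FiniteField.monicIrreducibleCount F k : ℝ) -
        ∑ k ∈ Icc 1 n, (Nat.card F : ℝ) ^ k / k|
      ≤ ∑ k ∈ Icc 1 n,
          |(FiniteField.monicIrreducibleCount F k : ℝ) - (Nat.card F : ℝ) ^ k / k| := by
        rw [← sum_sub_distrib]
        exact abs_sum_le_sum_abs _ _
    _ ≤ ∑ k ∈ Icc 1 n, 2 * (√(Nat.card F) ^ k / k) := sum_le_sum fun k hk => by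
        rw [← mul_div_assoc]
        exact FiniteField.abs_monicIrreducibleCount_sub_le (by grind)
    _ ≤ 2 * (11 / 2 * √(Nat.card F) ^ n / n) := by
        rw [← mul_sum]
        gcongr
        exact sum_pow_div_le hsqrt n
    _ = 11 * √(Nat.card F) ^ n / n := by ring

theorem stmt_1 (q : ℕ) (hq : IsPrimePow q) (F : Type*) [Field F] [Fintype F]
    (hF : Fintype.card F = q) (n : ℕ) (hn : 1 ≤ n) :
    |(Nat.card {f : Polynomial F // f.Monic ∧ Irreducible f ∧ f.natDegree ≤ n} : ℝ) -
        ∑ k ∈ Finset.Icc 1 n, (q : ℝ) ^ k / k| ≤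
      11 * (q : ℝ) ^ ((n : ℝ) / 2) / n :=
  stmt_1_general q F hF n
end

section
/- For every integer q ≥ 2 and every integer k ≥ 1, one has q^k − 2·q^{k/2} ≤ ∑_{d | k} μ(k/d)·q^d ≤ q^k, where μ is the Möbius function. -/
/-!
Write `S(n) = ∑_{d ∣ n} μ(n/d) q^d`. Splitting off the term `d = n`, the remaining divisors are
at most `n/2`, so `|S(n) - q^n| ≤ q + ⋯ + q^⌊n/2⌋ < 2 q^⌊n/2⌋` for `q ≥ 2`; this is the lower
bound, and it also shows `S(n) ≥ 0` for all `n ≥ 1`. Möbius inversion gives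
`∑_{d ∣ n} S(d) = q^n`, so `S(n) = q^n - ∑_{d ∣ n, d < n} S(d) ≤ q^n`.
-/

open Finset ArithmeticFunction
open scoped ArithmeticFunction.Moebius

namespace Nat

theorem properDivisors_subset_Icc_one_div_two (n : ℕ) : n.properDivisors ⊆ Icc 1 (n / 2) := by
  intro d hd
  obtain ⟨⟨e, rfl⟩, hlt⟩ := mem_properDivisors.mp hd
  have hd0 : 0 < d := Nat.pos_of_ne_zero (by rintro rfl; simp at hlt)
  have he : 2 ≤ e := by
    by_contra! h
    interval_cases e <;> simp at hlt
  exact mem_Icc.mpr ⟨hd0, (Nat.le_div_iff_mul_le two_pos).mpr (Nat.mul_le_mul_left d he)⟩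

end Nat

theorem sum_Icc_one_pow_le {q : ℝ} (hq : 2 ≤ q) (m : ℕ) :
    ∑ d ∈ Icc 1 m, q ^ d ≤ 2 * q ^ m - 2 := by
  induction m with
  | zero => simp
  | succ m ih =>
    rw [sum_Icc_succ_top (by omega), pow_succ]
    nlinarith [pow_nonneg (by linarith : (0 : ℝ) ≤ q) m]

/-- `n` times the necklace polynomial `M(q, n)`: the number of primitive words of length `n`
over an alphabet of `q` letters. -/
noncomputable def necklaceSum {R : Type*} [CommRing R] (q : R) (n : ℕ) : R :=
  ∑ d ∈ n.divisors, (μ (n / d) : R) * q ^ d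

section CommRing

variable {R : Type*} [CommRing R] (q : R)

theorem sum_divisors_necklaceSum {n : ℕ} (hn : 0 < n) :
    ∑ d ∈ n.divisors, necklaceSum q d = q ^ n := by
  refine (sum_eq_iff_sum_mul_moebius_eq.mpr (fun m _ => ?_)) n hn
  exact Nat.sum_divisorsAntidiagonal' (fun a b => (μ a : R) * q ^ b)

theorem necklaceSum_eq_pow_add {n : ℕ} (hn : 0 < n) :
    necklaceSum q n = q ^ n + ∑ d ∈ n.properDivisors, (μ (n / d) : R) * q ^ d := by
  rw [necklaceSum, ← Nat.cons_self_properDivisors hn.ne', sum_cons, Nat.div_self hn,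
    moebius_apply_one, Int.cast_one, one_mul]

end CommRing

section Real

variable {q : ℝ} (hq : 2 ≤ q)
include hq

theorem pow_sub_two_mul_pow_half_le_necklaceSum {n : ℕ} (hn : 0 < n) :
    q ^ n - 2 * q ^ (n / 2) ≤ necklaceSum q n := by
  have hq0 : 0 ≤ q := by linarith
  have hterm (d : ℕ) : -q ^ d ≤ (μ (n / d) : ℝ) * q ^ d := by
    refine neg_le_of_abs_le ?_
    rw [abs_mul, abs_of_nonneg (pow_nonneg hq0 d)]
    exact mul_le_of_le_one_left (pow_nonneg hq0 d) (by exact_mod_cast abs_moebius_le_one)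
  have hproper : ∑ d ∈ n.properDivisors, q ^ d ≤ 2 * q ^ (n / 2) - 2 :=
    (sum_le_sum_of_subset_of_nonneg (Nat.properDivisors_subset_Icc_one_div_two n)
      fun d _ _ => pow_nonneg hq0 d).trans (sum_Icc_one_pow_le hq _)
  calc q ^ n - 2 * q ^ (n / 2)
      ≤ q ^ n + ∑ d ∈ n.properDivisors, -q ^ d := by rw [sum_neg_distrib]; linarith
    _ ≤ q ^ n + ∑ d ∈ n.properDivisors, (μ (n / d) : ℝ) * q ^ d := by
      gcongr with d; exact hterm d
    _ = necklaceSum q n := (necklaceSum_eq_pow_add q hn).symm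

theorem necklaceSum_nonneg {n : ℕ} (hn : 0 < n) : 0 ≤ necklaceSum q n := by
  refine le_trans ?_ (pow_sub_two_mul_pow_half_le_necklaceSum hq hn)
  have hsplit : q ^ n = q ^ (n - n / 2) * q ^ (n / 2) := by
    rw [← pow_add, Nat.sub_add_cancel (Nat.div_le_self n 2)]
  have hq_le : q ≤ q ^ (n - n / 2) := le_self_pow₀ (by linarith) (by omega)
  nlinarith [pow_nonneg (by linarith : (0 : ℝ) ≤ q) (n / 2)]

theorem necklaceSum_le_pow {n : ℕ} (hn : 0 < n) : necklaceSum q n ≤ q ^ n := by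
  have hsum := sum_divisors_necklaceSum q hn
  rw [← Nat.cons_self_properDivisors hn.ne', sum_cons] at hsum
  have hproper : 0 ≤ ∑ d ∈ n.properDivisors, necklaceSum q d :=
    sum_nonneg fun d hd => necklaceSum_nonneg hq (Nat.pos_of_mem_properDivisors hd)
  linarith

end Real

theorem stmt_4 (q : ℕ) (hq : 2 ≤ q) (k : ℕ) (hk : 1 ≤ k) :
    (q : ℝ) ^ k - 2 * (q : ℝ) ^ ((k : ℝ) / 2) ≤
        ∑ d ∈ k.divisors, (ArithmeticFunction.moebius (k / d) : ℝ) * (q : ℝ) ^ d ∧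
      ∑ d ∈ k.divisors, (ArithmeticFunction.moebius (k / d) : ℝ) * (q : ℝ) ^ d ≤ (q : ℝ) ^ k := by
  have hq' : (2 : ℝ) ≤ q := by exact_mod_cast hq
  have hfloor : (q : ℝ) ^ (k / 2) ≤ (q : ℝ) ^ ((k : ℝ) / 2) := by
    rw [← Real.rpow_natCast]
    exact Real.rpow_le_rpow_of_exponent_le (by linarith) Nat.cast_div_le
  have hlower := pow_sub_two_mul_pow_half_le_necklaceSum hq' hk
  exact ⟨by unfold necklaceSum at hlower; linarith, necklaceSum_le_pow hq' hk⟩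
end

section
/- For all real q ≥ 2 and all integers n ≥ 1 and m ≥ 1, one has ∑_{1 ≤ k < n/2} (k^m/q^k)·(1/(1 − k/n)) ≤ 2^{m+2}·m!/q, where the sum ranges over integers k with 1 ≤ k < n/2. -/
/-!
Since `k < n/2`, the factor `1/(1 - k/n)` is at most `2`. Writing `k = j + 1`, the bound
`(j+1)^m ≤ (j+1)(j+2)⋯(j+m) = m! · C(j+m, m)` together with `q^(j+1) ≥ q · 2^j` dominates each
term by `(2 · m!/q) · C(j+m, m) 2^(-j)`, and `∑ⱼ C(j+m, m) xʲ = (1 - x)^(-(m+1))` at `x = 1/2`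
sums these to `2^(m+1)`.
-/

open scoped Nat

lemma one_div_one_sub_le_two {x : ℝ} (hx : x ≤ 1 / 2) : 1 / (1 - x) ≤ 2 := by
  rw [div_le_iff₀ (by linarith)]
  linarith

lemma Nat.succ_pow_le_factorial_mul_choose (j m : ℕ) : (j + 1) ^ m ≤ m ! * (j + m).choose m := by
  rw [← Nat.ascFactorial_eq_factorial_mul_choose]
  exact Nat.pow_succ_le_ascFactorial (j + 1) m

lemma hasSum_choose_mul_half_pow (m : ℕ) :
    HasSum (fun j : ℕ => ((j + m).choose m : ℝ) * (1 / 2) ^ j) (2 ^ (m + 1)) := by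
  have h := hasSum_choose_mul_geometric_of_norm_lt_one (𝕜 := ℝ) m (r := 1 / 2)
    (by rw [Real.norm_eq_abs, abs_of_pos] <;> norm_num)
  rwa [show (1 : ℝ) / (1 - 1 / 2) ^ (m + 1) = 2 ^ (m + 1) by
    rw [show (1 : ℝ) - 1 / 2 = 1 / 2 by norm_num, one_div_pow, one_div_one_div]] at h

lemma sum_comp_pred_le_tsum {g : ℕ → ℝ} (hg : 0 ≤ g) (hs : Summable g) {S : Finset ℕ}
    (hS : ∀ k ∈ S, 1 ≤ k) : ∑ k ∈ S, g (k - 1) ≤ ∑' j, g j := by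
  rw [← Finset.sum_image (f := g) (g := fun k => k - 1) fun a ha b hb hab => by
    have := hS a ha; have := hS b hb; simp only at hab; omega]
  exact hs.sum_le_tsum _ fun j _ => hg j

lemma succ_pow_div_pow_succ_le {q : ℝ} (hq : 2 ≤ q) (j m : ℕ) :
    ((j + 1 : ℕ) : ℝ) ^ m / q ^ (j + 1) ≤ m ! / q * (((j + m).choose m : ℝ) * (1 / 2) ^ j) := by
  have hnum : ((j + 1 : ℕ) : ℝ) ^ m ≤ m ! * (j + m).choose m := by
    exact_mod_cast Nat.succ_pow_le_factorial_mul_choose j m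
  have hden : q * 2 ^ j ≤ q ^ (j + 1) := by
    rw [pow_succ']
    exact mul_le_mul_of_nonneg_left (pow_le_pow_left₀ zero_le_two hq j) (by linarith)
  calc ((j + 1 : ℕ) : ℝ) ^ m / q ^ (j + 1) ≤ m ! * (j + m).choose m / (q * 2 ^ j) :=
        div_le_div₀ (by positivity) hnum (by positivity) hden
    _ = m ! / q * (((j + m).choose m : ℝ) * (1 / 2) ^ j) := by
        rw [one_div_pow, ← div_eq_mul_one_div, mul_div_mul_comm]

lemma pow_div_pow_mul_one_div_one_sub_div_le {q : ℝ} (hq : 2 ≤ q) {n m k : ℕ} (hk : 1 ≤ k)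
    (hkn : 2 * k ≤ n) :
    (k : ℝ) ^ m / q ^ k * (1 / (1 - (k : ℝ) / n)) ≤
      2 * m ! / q * (((k - 1 + m).choose m : ℝ) * (1 / 2) ^ (k - 1)) := by
  obtain ⟨j, rfl⟩ : ∃ j, k = j + 1 := ⟨k - 1, by omega⟩
  have hfrac : ((j + 1 : ℕ) : ℝ) / n ≤ 1 / 2 := by
    rw [div_le_div_iff₀ (by exact_mod_cast (show 0 < n by omega)) two_pos]
    exact_mod_cast (show (j + 1) * 2 ≤ 1 * n by omega)
  calc ((j + 1 : ℕ) : ℝ) ^ m / q ^ (j + 1) * (1 / (1 - ((j + 1 : ℕ) : ℝ) / n))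
      ≤ m ! / q * (((j + m).choose m : ℝ) * (1 / 2) ^ j) * 2 := by
        refine mul_le_mul (succ_pow_div_pow_succ_le hq j m) (one_div_one_sub_le_two hfrac) ?_
          (by positivity)
        exact one_div_nonneg.2 (by linarith)
    _ = _ := by simp only [Nat.add_sub_cancel]; ring

theorem stmt_7_general (q : ℝ) (hq : 2 ≤ q) (n m : ℕ) :
    ∑ k ∈ (Finset.Icc 1 n).filter (fun k => 2 * k < n),
        (k : ℝ) ^ m / q ^ k * (1 / (1 - (k : ℝ) / n)) ≤
      2 ^ (m + 2) * (Nat.factorial m) / q := by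
  set S := (Finset.Icc 1 n).filter (fun k => 2 * k < n)
  set g : ℕ → ℝ := fun j => ((j + m).choose m : ℝ) * (1 / 2) ^ j
  have hS : ∀ k ∈ S, 1 ≤ k ∧ 2 * k ≤ n := fun k hk => by
    simp only [S, Finset.mem_filter, Finset.mem_Icc] at hk
    omega
  have hg : ∑ k ∈ S, g (k - 1) ≤ 2 ^ (m + 1) := by
    rw [← (hasSum_choose_mul_half_pow m).tsum_eq]
    exact sum_comp_pred_le_tsum (fun j => by positivity) (hasSum_choose_mul_half_pow m).summable
      fun k hk => (hS k hk).1
  calc ∑ k ∈ S, (k : ℝ) ^ m / q ^ k * (1 / (1 - (k : ℝ) / n))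
      ≤ ∑ k ∈ S, 2 * m ! / q * g (k - 1) := Finset.sum_le_sum fun k hk =>
        pow_div_pow_mul_one_div_one_sub_div_le hq (hS k hk).1 (hS k hk).2
    _ = 2 * m ! / q * ∑ k ∈ S, g (k - 1) := by rw [Finset.mul_sum]
    _ ≤ 2 * m ! / q * 2 ^ (m + 1) := by gcongr
    _ = 2 ^ (m + 2) * m ! / q := by ring

theorem stmt_7 (q : ℝ) (hq : 2 ≤ q) (n m : ℕ) (hn : 1 ≤ n) (hm : 1 ≤ m) :
    ∑ k ∈ (Finset.Icc 1 n).filter (fun k => 2 * k < n),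
        (k : ℝ) ^ m / q ^ k * (1 / (1 - (k : ℝ) / n)) ≤
      2 ^ (m + 2) * (Nat.factorial m) / q :=
  stmt_7_general q hq n m
end

section
/- For every real number q ≥ 2 and all integers j ≥ 0 and n ≥ 1, the tail of the series satisfies ∑_{k=n}^{∞} k^j/q^k ≤ 2^{j+1}·j!·n^j/q^n. -/
/-!
Since `n ≥ 1`, we have `n + k ≤ n (k + 1)`, and `(k + 1)^j` is at most the rising factorial
`(k + 1) ⋯ (k + j) = j! * C(k + j, j)`. Hence the tail is dominated termwise by
`j! n^j r^n * ∑ₖ C(k + j, j) r^k = j! n^j r^n / (1 - r)^(j + 1)` with `r = 1/q`,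
and `1 / (1 - r) ≤ 2` for `q ≥ 2`.
-/

open Nat in
theorem Nat.add_pow_le_pow_mul_factorial_mul_choose {n : ℕ} (hn : 1 ≤ n) (k j : ℕ) :
    (n + k) ^ j ≤ n ^ j * (j ! * (k + j).choose j) := by
  rw [← ascFactorial_eq_factorial_mul_choose]
  calc (n + k) ^ j ≤ (n * (k + 1)) ^ j := Nat.pow_le_pow_left (by nlinarith) j
    _ = n ^ j * (k + 1) ^ j := mul_pow _ _ _
    _ ≤ n ^ j * (k + 1).ascFactorial j := Nat.mul_le_mul_left _ (pow_succ_le_ascFactorial _ _)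

open Nat in
theorem cast_add_pow_mul_pow_add_le {n : ℕ} (hn : 1 ≤ n) (j k : ℕ) {r : ℝ} (hr : 0 ≤ r) :
    ((n + k : ℕ) : ℝ) ^ j * r ^ (n + k) ≤
      j ! * n ^ j * r ^ n * ((k + j).choose j * r ^ k) := by
  have key : ((n + k : ℕ) : ℝ) ^ j ≤ n ^ j * (j ! * (k + j).choose j) := by
    exact_mod_cast Nat.add_pow_le_pow_mul_factorial_mul_choose hn k j
  calc ((n + k : ℕ) : ℝ) ^ j * r ^ (n + k) ≤ n ^ j * (j ! * (k + j).choose j) * r ^ (n + k) := by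
        gcongr
    _ = j ! * n ^ j * r ^ n * ((k + j).choose j * r ^ k) := by ring

open Nat in
theorem summable_and_tsum_add_pow_mul_geometric_le {n : ℕ} (hn : 1 ≤ n) (j : ℕ) {r : ℝ}
    (hr₀ : 0 ≤ r) (hr₁ : r < 1) :
    Summable (fun k : ℕ => ((n + k : ℕ) : ℝ) ^ j * r ^ (n + k)) ∧
      ∑' k : ℕ, ((n + k : ℕ) : ℝ) ^ j * r ^ (n + k) ≤ j ! * n ^ j * r ^ n / (1 - r) ^ (j + 1) := by
  have hgeom := (hasSum_choose_mul_geometric_of_norm_lt_one j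
    (show ‖r‖ < 1 by rwa [Real.norm_of_nonneg hr₀])).mul_left (j ! * n ^ j * r ^ n)
  have hle k := cast_add_pow_mul_pow_add_le hn j k hr₀
  have hsum := Summable.of_nonneg_of_le (fun k => by positivity) hle hgeom.summable
  refine ⟨hsum, ?_⟩
  calc _ ≤ j ! * n ^ j * r ^ n * (1 / (1 - r) ^ (j + 1)) := hasSum_le hle hsum.hasSum hgeom
    _ = _ := by ring

theorem stmt_12 (q : ℝ) (hq : 2 ≤ q) (j n : ℕ) (hn : 1 ≤ n) :
    Summable (fun k : ℕ => ((n + k : ℕ) : ℝ) ^ j / q ^ (n + k)) ∧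
      ∑' k : ℕ, ((n + k : ℕ) : ℝ) ^ j / q ^ (n + k) ≤
        2 ^ (j + 1) * (Nat.factorial j) * (n : ℝ) ^ j / q ^ n := by
  have hq₀ : 0 < q := by linarith
  have hr : q⁻¹ ≤ 2⁻¹ := inv_anti₀ two_pos hq
  have hterm : (fun k : ℕ => ((n + k : ℕ) : ℝ) ^ j / q ^ (n + k)) =
      fun k => ((n + k : ℕ) : ℝ) ^ j * q⁻¹ ^ (n + k) := by
    simp only [inv_pow, div_eq_mul_inv]
  obtain ⟨hsum, hle⟩ := summable_and_tsum_add_pow_mul_geometric_le hn j (inv_nonneg.2 hq₀.le)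
    (by linarith)
  rw [hterm]
  refine ⟨hsum, hle.trans ?_⟩
  have hgap : (2 : ℝ)⁻¹ ≤ 1 - q⁻¹ := by linarith
  calc (j.factorial : ℝ) * n ^ j * q⁻¹ ^ n / (1 - q⁻¹) ^ (j + 1)
      ≤ j.factorial * n ^ j * q⁻¹ ^ n / 2⁻¹ ^ (j + 1) := by gcongr
    _ = 2 ^ (j + 1) * j.factorial * n ^ j / q ^ n := by
      rw [inv_pow, inv_pow]; field_simp
end

section
/- For all real q ≥ 2 and integers n ≥ 1, j ≥ 0, one has |(q^n/n^{j+1})·∑_{k=1}^{n−1} k^j/q^k − (q^{n−1}/n^{j+1})·∑_{i=0}^{j} (−1)^{j−i}·i!·S(j,i)·(q/(q−1))^{i+1}| ≤ 2^{j+1}·j!/n. -/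
/-- The Stirling numbers of the second kind: `stirling2 n k` is the number of
partitions of a set with `n` elements into `k` nonempty blocks. -/
def stirling2 : ℕ → ℕ → ℕ
  | 0, 0 => 1
  | 0, _ + 1 => 0
  | _ + 1, 0 => 0
  | n + 1, k + 1 => (k + 1) * stirling2 n (k + 1) + stirling2 n k

/-!
Put `r = 1 / q`. Expanding `x ^ j` in falling factorials and evaluating at `x = -(t + 1)` gives
`(t + 1) ^ j = ∑ i, (-1) ^ (j - i) * i! * S(j, i) * choose (t + i) i`; together with
`∑ t, choose (t + i) i * r ^ t = (1 - r)⁻¹ ^ (i + 1)` this identifies the Stirling sum with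
`∑ t, (t + 1) ^ j * r ^ t`, whose first `n - 1` terms add up to `q` times the finite sum. The
difference is thus a tail of the series, equal after scaling to `∑ t, (t + n) ^ j * r ^ t`. Since
`(t + n) ^ j ≤ n ^ j * (t + 1) ^ j ≤ n ^ j * j! * choose (t + j) j` and `r ≤ 1 / 2`, this is at
most `n ^ j * j! * 2 ^ (j + 1)`.
-/

open Finset Polynomial Nat

theorem stirling2_eq_stirlingSecond : stirling2 = Nat.stirlingSecond := by
  funext n k
  induction n generalizing k with
  | zero => cases k <;> rfl
  | succ n ih => cases k <;> simp [stirling2, Nat.stirlingSecond_succ_succ, ih]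

theorem pow_eq_sum_stirlingSecond_mul_descPochhammer_eval {R : Type*} [CommRing R]
    (n : ℕ) (x : R) :
    x ^ n = ∑ k ∈ range (n + 1), (n.stirlingSecond k : R) * (descPochhammer R k).eval x := by
  induction n with
  | zero => simp
  | succ n ih =>
    set d : ℕ → R := fun k ↦ (descPochhammer R k).eval x
    set g : ℕ → R := fun k ↦ k * n.stirlingSecond k * d k
    have hmul (k : ℕ) : d k * x = d (k + 1) + k * d k := by
      simp only [d, descPochhammer_succ_eval]; ring
    have hshift : ∑ k ∈ range (n + 1), g k = ∑ k ∈ range (n + 1), g (k + 1) := by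
      have h := (sum_range_succ g (n + 1)).symm.trans (sum_range_succ' g (n + 1))
      simpa [g, Nat.stirlingSecond_eq_zero_of_lt n.lt_succ_self] using h
    calc x ^ (n + 1) = ∑ k ∈ range (n + 1), (n.stirlingSecond k : R) * d k * x := by
          rw [pow_succ, ih, sum_mul]
      _ = ∑ k ∈ range (n + 1), (n.stirlingSecond k : R) * d (k + 1) +
            ∑ k ∈ range (n + 1), g k := by
          rw [← sum_add_distrib]
          refine sum_congr rfl fun k _ ↦ ?_
          rw [mul_assoc, hmul]; ring
      _ = ∑ k ∈ range (n + 1), ((n + 1).stirlingSecond (k + 1) : R) * d (k + 1) := by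
          rw [hshift, ← sum_add_distrib]
          refine sum_congr rfl fun k _ ↦ ?_
          simp only [g, Nat.stirlingSecond_succ_succ]; push_cast; ring
      _ = _ := by simp [sum_range_succ' _ (n + 1), d]

theorem descPochhammer_eval_neg_natCast_add_one {R : Type*} [CommRing R] (t i : ℕ) :
    (descPochhammer R i).eval (-((t : R) + 1)) = (-1) ^ i * (i ! * (t + i).choose i) := by
  have h := ascPochhammer_eval_neg_eq_descPochhammer (R := R) (-((t : R) + 1)) i
  rw [neg_neg, ← Nat.cast_succ, ← cast_ascFactorial, ascFactorial_eq_factorial_mul_choose] at h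
  push_cast at h
  rw [h, ← mul_assoc, ← mul_pow]
  simp

theorem natCast_add_one_pow_eq_sum_stirlingSecond {R : Type*} [CommRing R] (j t : ℕ) :
    ((t : R) + 1) ^ j = ∑ i ∈ range (j + 1),
      (-1) ^ (j - i) * (i ! : R) * j.stirlingSecond i * (t + i).choose i := by
  have hsign : ((t : R) + 1) ^ j = (-1) ^ j * (-((t : R) + 1)) ^ j := by
    rw [← mul_pow, neg_one_mul, neg_neg]
  rw [hsign, pow_eq_sum_stirlingSecond_mul_descPochhammer_eval j (-((t : R) + 1)), mul_sum]
  refine sum_congr rfl fun i hi ↦ ?_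
  obtain ⟨m, rfl⟩ := Nat.exists_eq_add_of_le (mem_range_succ_iff.mp hi)
  have hsq : ((-1 : R) ^ i) ^ 2 = 1 := by rw [← pow_mul, pow_mul', neg_one_sq, one_pow]
  rw [descPochhammer_eval_neg_natCast_add_one, Nat.add_sub_cancel_left, pow_add]
  linear_combination ((-1) ^ m * (i ! : R) * (i + m).stirlingSecond i * (t + i).choose i) * hsq

theorem hasSum_natCast_add_one_pow_mul_geometric {𝕜 : Type*} [NormedField 𝕜] (j : ℕ) {r : 𝕜}
    (hr : ‖r‖ < 1) :
    HasSum (fun t : ℕ ↦ ((t : 𝕜) + 1) ^ j * r ^ t) (∑ i ∈ range (j + 1),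
      (-1) ^ (j - i) * (i ! : 𝕜) * j.stirlingSecond i * (1 / (1 - r)) ^ (i + 1)) := by
  have h := hasSum_sum fun i (_ : i ∈ range (j + 1)) ↦
    (hasSum_choose_mul_geometric_of_norm_lt_one i hr).mul_left
      ((-1) ^ (j - i) * (i ! : 𝕜) * j.stirlingSecond i)
  have hterm : (fun t : ℕ ↦ ((t : 𝕜) + 1) ^ j * r ^ t) = fun t ↦ ∑ i ∈ range (j + 1),
      (-1) ^ (j - i) * (i ! : 𝕜) * j.stirlingSecond i * ((t + i).choose i * r ^ t) := by
    funext t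
    rw [natCast_add_one_pow_eq_sum_stirlingSecond, sum_mul]
    exact sum_congr rfl fun i _ ↦ by ring
  simpa only [hterm, one_div_pow] using h

theorem add_one_pow_le_factorial_mul_choose (t j : ℕ) : (t + 1) ^ j ≤ j ! * (t + j).choose j := by
  rw [← ascFactorial_eq_factorial_mul_choose]
  exact pow_succ_le_ascFactorial _ _

theorem tsum_add_pow_mul_geometric_le (j : ℕ) {c r : ℝ} (hc : 1 ≤ c) (hr0 : 0 ≤ r)
    (hr : r ≤ 1 / 2) :
    ∑' t : ℕ, ((t : ℝ) + c) ^ j * r ^ t ≤ c ^ j * j ! * 2 ^ (j + 1) := by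
  have hr1 : ‖r‖ < 1 := by rw [Real.norm_of_nonneg hr0]; linarith
  have hle (t : ℕ) : ((t : ℝ) + c) ^ j * r ^ t ≤ c ^ j * j ! * ((t + j).choose j * r ^ t) := by
    have hbase : (t : ℝ) + c ≤ c * (t + 1) := by nlinarith [t.cast_nonneg (α := ℝ)]
    have hchoose : ((t : ℝ) + 1) ^ j ≤ j ! * (t + j).choose j := by
      exact_mod_cast add_one_pow_le_factorial_mul_choose t j
    calc ((t : ℝ) + c) ^ j * r ^ t ≤ c ^ j * ((t : ℝ) + 1) ^ j * r ^ t := by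
          rw [← mul_pow]; gcongr
      _ ≤ c ^ j * (j ! * (t + j).choose j) * r ^ t := by gcongr
      _ = _ := by ring
  have hsum := (hasSum_choose_mul_geometric_of_norm_lt_one j hr1).mul_left (c ^ j * j !)
  have hgeom : 1 / (1 - r) ^ (j + 1) ≤ 2 ^ (j + 1) := by
    have hinv : (1 - r)⁻¹ ≤ 2 := by
      rw [inv_le_comm₀ (by linarith) two_pos]
      linarith
    rw [one_div, ← inv_pow]
    exact pow_le_pow_left₀ (inv_nonneg.mpr (by linarith)) hinv _
  calc ∑' t : ℕ, ((t : ℝ) + c) ^ j * r ^ t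
      ≤ ∑' t : ℕ, c ^ j * j ! * ((t + j).choose j * r ^ t) :=
        (hsum.summable.of_nonneg_of_le (fun t ↦ by positivity) hle).tsum_le_tsum hle hsum.summable
    _ = c ^ j * j ! * (1 / (1 - r) ^ (j + 1)) := hsum.tsum_eq
    _ ≤ c ^ j * j ! * 2 ^ (j + 1) := by gcongr

theorem sum_Icc_pow_div_pow_eq {K : Type*} [Field K] (j m : ℕ) (q : K) :
    ∑ k ∈ Icc 1 m, (k : K) ^ j / q ^ k = q⁻¹ * ∑ t ∈ range m, ((t : K) + 1) ^ j * q⁻¹ ^ t := by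
  rw [← Ico_add_one_right_eq_Icc, sum_Ico_eq_sum_range, add_tsub_cancel_right, mul_sum]
  refine sum_congr rfl fun t _ ↦ ?_
  simp only [inv_pow]
  push_cast
  ring

theorem sum_range_add_pow_mul_tsum_eq_sum_stirlingSecond {𝕜 : Type*} [NormedField 𝕜]
    (j m : ℕ) {r : 𝕜} (hr : ‖r‖ < 1) :
    ∑ t ∈ range m, ((t : 𝕜) + 1) ^ j * r ^ t + r ^ m * ∑' t : ℕ, ((t : 𝕜) + (m + 1)) ^ j * r ^ t =
      ∑ i ∈ range (j + 1),
        (-1) ^ (j - i) * (i ! : 𝕜) * j.stirlingSecond i * (1 / (1 - r)) ^ (i + 1) := by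
  have hF := hasSum_natCast_add_one_pow_mul_geometric j hr
  rw [← hF.tsum_eq, ← hF.summable.sum_add_tsum_nat_add m, ← tsum_mul_left]
  congr 2
  funext t
  push_cast
  ring

theorem pow_mul_sum_Icc_sub_pow_mul_sum_stirlingSecond {q : ℝ} (hq : 1 < q) (j m : ℕ) :
    q ^ (m + 1) * ∑ k ∈ Icc 1 m, (k : ℝ) ^ j / q ^ k - q ^ m * ∑ i ∈ range (j + 1),
        (-1) ^ (j - i) * (i ! : ℝ) * j.stirlingSecond i * (q / (q - 1)) ^ (i + 1) =
      -∑' t : ℕ, ((t : ℝ) + (m + 1 : ℕ)) ^ j * q⁻¹ ^ t := by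
  have hq0 : q ≠ 0 := by positivity
  have hr : ‖q⁻¹‖ < 1 := by
    rw [norm_inv, Real.norm_of_nonneg (by positivity)]
    exact inv_lt_one_of_one_lt₀ hq
  have hgeom : 1 / (1 - q⁻¹) = q / (q - 1) := by
    have : q - 1 ≠ 0 := by linarith
    field_simp
  have hqr : q * q⁻¹ = 1 := mul_inv_cancel₀ hq0
  have hqmr : q ^ m * q⁻¹ ^ m = 1 := by rw [← mul_pow, hqr, one_pow]
  rw [sum_Icc_pow_div_pow_eq, ← hgeom, ← sum_range_add_pow_mul_tsum_eq_sum_stirlingSecond j m hr]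
  push_cast
  set S := ∑ t ∈ range m, ((t : ℝ) + 1) ^ j * q⁻¹ ^ t
  set W := ∑' t : ℕ, ((t : ℝ) + (m + 1)) ^ j * q⁻¹ ^ t
  linear_combination (q ^ m * S) * hqr - W * hqmr

theorem stmt_17 (q : ℝ) (hq : 2 ≤ q) (n j : ℕ) (hn : 1 ≤ n) :
    |(q ^ n / (n : ℝ) ^ (j + 1)) * ∑ k ∈ Finset.Icc 1 (n - 1), (k : ℝ) ^ j / q ^ k -
        (q ^ (n - 1) / (n : ℝ) ^ (j + 1)) *
          ∑ i ∈ Finset.range (j + 1),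
            (-1 : ℝ) ^ (j - i) * (Nat.factorial i) * (stirling2 j i) *
              (q / (q - 1)) ^ (i + 1)| ≤
      2 ^ (j + 1) * (Nat.factorial j) / n := by
  obtain ⟨m, rfl⟩ := Nat.exists_eq_add_of_le' hn
  have hr : q⁻¹ ≤ 1 / 2 := by rw [one_div]; exact inv_anti₀ two_pos hq
  have hdiff := pow_mul_sum_Icc_sub_pow_mul_sum_stirlingSecond (one_lt_two.trans_le hq) j m
  rw [← stirling2_eq_stirlingSecond] at hdiff
  rw [Nat.add_sub_cancel, div_mul_eq_mul_div, div_mul_eq_mul_div, ← sub_div, hdiff, neg_div,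
    abs_neg, abs_of_nonneg (by positivity)]
  calc (∑' t : ℕ, ((t : ℝ) + (m + 1 : ℕ)) ^ j * q⁻¹ ^ t) / ((m + 1 : ℕ) : ℝ) ^ (j + 1)
      ≤ (m + 1 : ℕ) ^ j * j ! * 2 ^ (j + 1) / ((m + 1 : ℕ) : ℝ) ^ (j + 1) := by
        gcongr
        exact tsum_add_pow_mul_geometric_le j (by simp) (by positivity) hr
    _ = 2 ^ (j + 1) * j ! / (m + 1 : ℕ) := by
        field_simp
        ring
end
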